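/- arXiv:1602.07379 — 2 statements merged into one kernel-verified Lean document; each statement's English description precedes it below -/
import Mathlib

section
/- For a finite group Γ, the number of homomorphisms from the fundamental group of the closed orientable surface of genus g to Γ, weighted by 1/|Γ| (orbifold count of Γ-local systems), equals |Γ|^{2g-2} · Σ_χ (1/χ(1))^{2g-2}, the sum over irreducible complex characters of Γ. -/
/-!
Count through characters. Decomposing the regular representation into irreducibles (Maschke),
orthogonality shows that each irreducible character `χ` occurs `χ 1` times, so
`∑_χ χ 1 * χ x = |Γ| * [x = 1]`; hence `|Γ|` times the number of solutions of
`∏ ⁅aᵢ, bᵢ⁆ = 1` is `∑_χ χ 1 * ∑_{a, b} χ (∏ ⁅aᵢ, bᵢ⁆)`. For an irreducible `ρ` of degree `d`,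
Schur's lemma makes `∑_a ρ (a x a⁻¹)` and `∑_b χ b • ρ b⁻¹` scalars, which gives
`∑_{x, y} χ (⁅x, y⁆ * w) = (|Γ| / d) ^ 2 * χ w`; peeling off one commutator at a time, the inner
sum is `(|Γ| / d) ^ (2 g) * χ 1`.
-/

open Module CategoryTheory
open scoped MonoidAlgebra commutatorElement

universe u

theorem Subrepresentation.isCompl_toSubmodule {A G W : Type*} [Semiring A] [Monoid G]
    [AddCommMonoid W] [Module A W] {ρ : Representation A G W} {p q : Subrepresentation ρ}
    (h : IsCompl p q) :
    IsCompl p.toSubmodule q.toSubmodule where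
  disjoint := disjoint_iff.mpr (congrArg Subrepresentation.toSubmodule h.inf_eq_bot)
  codisjoint := codisjoint_iff.mpr (congrArg Subrepresentation.toSubmodule h.sup_eq_top)

namespace Representation

section Decomposition

variable {k G : Type u} [Field k] [Group G] {V : Type u} [AddCommGroup V] [Module k V]
  [FiniteDimensional k V]

theorem character_eq_add_of_isCompl {ρ : Representation k G V} {p q : Subrepresentation ρ}
    (h : IsCompl p q) (g : G) :
    ρ.character g = p.toRepresentation.character g + q.toRepresentation.character g := by
  have hint : DirectSum.IsInternal ![p.toSubmodule, q.toSubmodule] :=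
    (DirectSum.isInternal_submodule_iff_isCompl _ (i := 0) (j := 1) (by decide)
      (by ext i; fin_cases i <;> simp)).mpr (Subrepresentation.isCompl_toSubmodule h)
  have hmaps : ∀ i, Set.MapsTo (ρ g) (![p.toSubmodule, q.toSubmodule] i)
      (![p.toSubmodule, q.toSubmodule] i) := by
    intro i; fin_cases i
    exacts [fun v hv => p.apply_mem_toSubmodule g hv, fun v hv => q.apply_mem_toSubmodule g hv]
  rw [character, LinearMap.trace_eq_sum_trace_restrict hint hmaps, Fin.sum_univ_two]
  rfl

theorem exists_character_eq_sum_irreducible [Finite G] [NeZero (Nat.card G : k)]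
    (ρ : Representation k G V) :
    ∃ l : List (FDRep k G), (∀ W ∈ l, IsIrreducible W.ρ) ∧
      ρ.character = (l.map FDRep.character).sum := by
  induction hn : finrank k V using Nat.strong_induction_on generalizing V with
  | _ n ih =>
  rcases subsingleton_or_nontrivial V with hV | hV
  · refine ⟨[], by simp, funext fun g => ?_⟩
    simp [character, Subsingleton.elim (ρ g) 0]
  by_cases hirr : ρ.IsIrreducible
  · exact ⟨[FDRep.of ρ], by simpa using hirr, by simp; rfl⟩
  have : Nontrivial (Subrepresentation ρ) :=
    ⟨⊥, ⊤, fun h => bot_ne_top (congrArg Subrepresentation.toSubmodule h)⟩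
  obtain ⟨p, hp_bot, hp_top⟩ : ∃ p : Subrepresentation ρ, p ≠ ⊥ ∧ p ≠ ⊤ := by
    by_contra! h
    exact hirr ⟨fun p => (em (p = ⊥)).imp_right (h p)⟩
  obtain ⟨q, hpq⟩ := exists_isCompl p
  have hq_top : q ≠ ⊤ := fun hq => hp_bot (eq_bot_of_isCompl_top (hq ▸ hpq))
  have hlt : ∀ r : Subrepresentation ρ, r ≠ ⊤ → finrank k r.toSubmodule < n := fun r hr =>
    hn ▸ Submodule.finrank_lt (fun h => hr (Subrepresentation.toSubmodule_injective h))
  obtain ⟨l₁, hl₁, hχ₁⟩ := ih _ (hlt p hp_top) p.toRepresentation rfl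
  obtain ⟨l₂, hl₂, hχ₂⟩ := ih _ (hlt q hq_top) q.toRepresentation rfl
  refine ⟨l₁ ++ l₂, fun W hW => ?_, funext fun g => ?_⟩
  · exact (List.mem_append.mp hW).elim (hl₁ W) (hl₂ W)
  · rw [character_eq_add_of_isCompl hpq, hχ₁, hχ₂]
    simp

end Decomposition

section Irreducible

variable {k G V : Type*} [Field k] [Group G] [AddCommGroup V] [Module k V]
  [FiniteDimensional k V]

theorem character_leftRegular_apply [Fintype G] [DecidableEq G] (g : G) :
    (leftRegular k G).character g = if g = 1 then (Fintype.card G : k) else 0 := by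
  rw [character, LinearMap.trace_eq_matrix_trace k (MonoidAlgebra.basis G k), Matrix.trace]
  simp [LinearMap.toMatrix_apply, MonoidAlgebra.basis, Finsupp.single_apply]

theorem IsIrreducible.finrank_ne_zero [CharZero k] (ρ : Representation k G V) [IsIrreducible ρ] :
    (finrank k V : k) ≠ 0 := by
  have : Nontrivial V := IsSimpleModule.nontrivial (MonoidAlgebra k G) ρ.asModule
  exact_mod_cast Module.finrank_pos.ne'

variable [IsAlgClosed k] [CharZero k] (ρ : Representation k G V) [IsIrreducible ρ]

theorem IsIrreducible.eq_trace_div_smul_one_of_commute (T : Module.End k V)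
    (hT : ∀ g, Commute (ρ g) T) : T = (LinearMap.trace k V T / finrank k V) • 1 := by
  obtain ⟨c, hc⟩ := IsIrreducible.algebraMap_intertwiningMap_bijective_of_isAlgClosed
    (ρ := ρ).2 ⟨T, fun g => (hT g).eq.symm⟩
  obtain rfl : T = c • 1 := congrArg IntertwiningMap.toLinearMap hc.symm
  rw [map_smul, LinearMap.trace_one, smul_eq_mul,
    mul_div_cancel_right₀ _ (IsIrreducible.finrank_ne_zero ρ)]

variable [Fintype G]

theorem IsIrreducible.sum_conj_eq_smul_one (x : G) :
    ∑ a, ρ (a * x * a⁻¹) = (Fintype.card G * ρ.character x / finrank k V) • 1 := by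
  have hT : ∀ h, Commute (ρ h) (∑ a, ρ (a * x * a⁻¹)) := fun h => by
    simp only [Commute, SemiconjBy, Finset.mul_sum, Finset.sum_mul, ← map_mul]
    exact Fintype.sum_equiv (Equiv.mulLeft h) _ _ fun a => by simp [mul_assoc]
  rw [IsIrreducible.eq_trace_div_smul_one_of_commute ρ _ hT, map_sum]
  congr 2
  calc ∑ a, LinearMap.trace k V (ρ (a * x * a⁻¹)) = ∑ a : G, ρ.character x :=
        Finset.sum_congr rfl fun a _ => ρ.char_conj x a
    _ = Fintype.card G * ρ.character x := by simp

theorem IsIrreducible.sum_character_mul_character_inv :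
    ∑ g, ρ.character g * ρ.character g⁻¹ = Fintype.card G := by
  have : Invertible (Nat.card G : k) := invertibleOfNonzero (by simp)
  have h := card_inv_mul_sum_char_mul_char_eq_finrank ρ ρ
  rw [IsIrreducible.finrank_intertwiningMap_self, Nat.cast_one, inv_mul_eq_one₀ (by simp)] at h
  rw [← h, Nat.card_eq_fintype_card]

theorem IsIrreducible.sum_character_smul_inv_eq_smul_one :
    ∑ b, ρ.character b • ρ b⁻¹ = (Fintype.card G / finrank k V : k) • 1 := by
  have hT : ∀ h, Commute (ρ h) (∑ b, ρ.character b • ρ b⁻¹) := fun h => by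
    simp only [Commute, SemiconjBy, Finset.mul_sum, Finset.sum_mul, mul_smul_comm, smul_mul_assoc,
      ← map_mul]
    refine Fintype.sum_equiv (MulAut.conj h).toEquiv _ _ fun b => ?_
    simp only [MulEquiv.toEquiv_eq_coe, MulEquiv.coe_toEquiv, MulAut.conj_apply]
    rw [char_conj]
    group
  rw [IsIrreducible.eq_trace_div_smul_one_of_commute ρ _ hT, map_sum]
  simp_rw [map_smul, smul_eq_mul]
  congr 2
  exact IsIrreducible.sum_character_mul_character_inv ρ

theorem IsIrreducible.sum_character_conj_mul (x y : G) :
    ∑ a, ρ.character (a * x * a⁻¹ * y) =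
      Fintype.card G * ρ.character x / finrank k V * ρ.character y := by
  calc ∑ a, ρ.character (a * x * a⁻¹ * y)
      = LinearMap.trace k V ((∑ a, ρ (a * x * a⁻¹)) * ρ y) := by
        simp [Finset.sum_mul, character]
    _ = _ := by
        rw [IsIrreducible.sum_conj_eq_smul_one, smul_mul_assoc, one_mul, map_smul, smul_eq_mul]
        rfl

theorem IsIrreducible.sum_character_mul_character_inv_mul (w : G) :
    ∑ b, ρ.character b * ρ.character (b⁻¹ * w) =
      Fintype.card G / finrank k V * ρ.character w := by
  calc ∑ b, ρ.character b * ρ.character (b⁻¹ * w)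
      = LinearMap.trace k V ((∑ b, ρ.character b • ρ b⁻¹) * ρ w) := by
        simp [Finset.sum_mul, character]
    _ = _ := by
        rw [IsIrreducible.sum_character_smul_inv_eq_smul_one, smul_mul_assoc, one_mul, map_smul,
          smul_eq_mul]
        rfl

theorem IsIrreducible.sum_character_commutator_mul (w : G) :
    ∑ x : G, ∑ y : G, ρ.character (⁅x, y⁆ * w) =
      (Fintype.card G / finrank k V) ^ 2 * ρ.character w := by
  calc ∑ x : G, ∑ y : G, ρ.character (⁅x, y⁆ * w)
      = ∑ y, ∑ x, ρ.character (x * y * x⁻¹ * (y⁻¹ * w)) := by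
        rw [Finset.sum_comm]
        simp only [commutatorElement_def, mul_assoc]
    _ = ∑ y, Fintype.card G / finrank k V * (ρ.character y * ρ.character (y⁻¹ * w)) := by
        refine Finset.sum_congr rfl fun y _ => ?_
        rw [IsIrreducible.sum_character_conj_mul]
        ring
    _ = _ := by
        rw [← Finset.mul_sum, IsIrreducible.sum_character_mul_character_inv_mul]
        ring

end Irreducible

end Representation

def surfaceRelator {G : Type*} [Group G] {g : ℕ} (a b : Fin g → G) : G :=
  (List.ofFn fun i => ⁅a i, b i⁆).prod

theorem surfaceRelator_cons {G : Type*} [Group G] {g : ℕ} (x y : G) (a b : Fin g → G) :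
    surfaceRelator (Fin.cons x a : Fin (g + 1) → G) (Fin.cons y b) =
      ⁅x, y⁆ * surfaceRelator a b := by
  simp [surfaceRelator, List.ofFn_succ]

theorem sum_surfaceRelator_mul {G R : Type*} [Group G] [Fintype G] [CommSemiring R]
    (f : G → R) (c : R) (hf : ∀ w, ∑ x : G, ∑ y : G, f (⁅x, y⁆ * w) = c * f w) (g : ℕ)
    (w : G) :
    ∑ p : (Fin g → G) × (Fin g → G), f (surfaceRelator p.1 p.2 * w) = c ^ g * f w := by
  induction g generalizing w with
  | zero => simp [surfaceRelator]
  | succ g ih =>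
    let e : ((Fin g → G) × (Fin g → G)) × (G × G) ≃
        (Fin (g + 1) → G) × (Fin (g + 1) → G) :=
      (Equiv.prodProdProdComm _ _ _ _).trans <|
        .prodCongr ((Equiv.prodComm _ _).trans (Fin.consEquiv fun _ => G))
          ((Equiv.prodComm _ _).trans (Fin.consEquiv fun _ => G))
    calc ∑ p : (Fin (g + 1) → G) × (Fin (g + 1) → G), f (surfaceRelator p.1 p.2 * w)
        = ∑ p : (Fin g → G) × (Fin g → G), ∑ x : G, ∑ y : G,
            f (⁅x, y⁆ * (surfaceRelator p.1 p.2 * w)) := by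
          rw [← e.sum_comp, Fintype.sum_prod_type]
          refine Finset.sum_congr rfl fun p _ => ?_
          rw [Fintype.sum_prod_type]
          refine Finset.sum_congr rfl fun x _ => Finset.sum_congr rfl fun y _ => ?_
          rw [← mul_assoc, ← surfaceRelator_cons]
          rfl
      _ = c ^ (g + 1) * f w := by
          simp only [hf, ← Finset.mul_sum, ih]
          ring

namespace FDRep

variable {k G : Type u} [Field k] [IsAlgClosed k] [CharZero k] [Group G] [Fintype G]

theorem simple_of_isIrreducible (V : FDRep k G) [Representation.IsIrreducible V.ρ] : Simple V := by
  rw [simple_iff_char_is_norm_one, Nat.card_eq_fintype_card]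
  exact Representation.IsIrreducible.sum_character_mul_character_inv V.ρ

open scoped Classical in
theorem sum_char_mul_char_inv_eq_ite (V W : FDRep k G) [Simple V] [Simple W] :
    ∑ g, V.character g * W.character g⁻¹ =
      if V.character = W.character then (Fintype.card G : k) else 0 := by
  have : Invertible (Nat.card G : k) := invertibleOfNonzero (by simp)
  have hVV := char_orthonormal V V
  have hVW := char_orthonormal V W
  rw [if_pos ⟨Iso.refl V⟩, inv_mul_eq_one₀ (by simp), Nat.card_eq_fintype_card] at hVV
  by_cases hiso : Nonempty (V ≅ W)
  · rw [if_pos (char_iso hiso.some), ← char_iso hiso.some, hVV]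
  · rw [if_neg hiso, mul_eq_zero, or_iff_right (by simp)] at hVW
    split_ifs with hχ
    · rw [← hχ, hVV]
    · exact hVW

open scoped Classical in
theorem count_character_mul_card (l : List (FDRep k G)) (hl : ∀ W ∈ l, Simple W) (V : FDRep k G)
    [Simple V] :
    ((l.map character).count V.character : k) * Fintype.card G =
      ∑ g, V.character g * (l.map character).sum g⁻¹ := by
  induction l with
  | nil => simp
  | cons W l ih =>
    have : Simple W := hl W (by simp)
    simp only [List.map_cons, List.count_cons, List.sum_cons, Pi.add_apply, mul_add,
      Finset.sum_add_distrib, sum_char_mul_char_inv_eq_ite V W, beq_iff_eq,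
      eq_comm (a := W.character), ← ih fun W hW => hl W (by simp [hW])]
    push_cast
    split_ifs <;> ring

theorem finrank_pos_of_simple (V : FDRep k G) [Simple V] : 0 < finrank k V := by
  by_contra! h
  have : Subsingleton V := finrank_zero_iff.mp (Nat.le_zero.mp h)
  have hnorm := (simple_iff_char_is_norm_one V).mp inferInstance
  simp [character, Subsingleton.elim (V.ρ _) 0, eq_comm (a := (0 : k))] at hnorm

open scoped Classical in
theorem count_character_eq_finrank {l : List (FDRep k G)}
    (hl : ∀ W ∈ l, Representation.IsIrreducible W.ρ)
    (hreg : (Representation.leftRegular k G).character = (l.map character).sum)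
    (V : FDRep k G) [Simple V] :
    (l.map character).count V.character = finrank k V := by
  have h := count_character_mul_card l (fun W hW => have := hl W hW; simple_of_isIrreducible W) V
  rw [← hreg] at h
  simp only [Representation.character_leftRegular_apply, inv_eq_one, mul_ite, mul_zero,
    Finset.sum_ite_eq', Finset.mem_univ, if_true, char_one] at h
  exact_mod_cast mul_right_cancel₀ (by simp) h

theorem exists_isIrreducible_character_eq (V : FDRep k G) [Simple V] :
    ∃ W : FDRep k G, Representation.IsIrreducible W.ρ ∧ W.character = V.character := by
  classical
  obtain ⟨l, hl, hreg⟩ := (Representation.leftRegular k G).exists_character_eq_sum_irreducible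
  have hcount := count_character_eq_finrank hl hreg V
  -- `V` occurs in the regular representation, with multiplicity `dim V > 0`.
  obtain ⟨W, hW, hWV⟩ :=
    List.mem_map.mp (List.count_pos_iff.mp (hcount ▸ finrank_pos_of_simple V))
  exact ⟨W, hl W hW, hWV⟩

theorem sum_apply_one_mul_apply_eq_ite [DecidableEq G] (s : Finset (G → k))
    (hs : ∀ χ, χ ∈ s ↔ ∃ V : FDRep k G, Simple V ∧ χ = V.character) (x : G) :
    ∑ χ ∈ s, χ 1 * χ x = if x = 1 then (Fintype.card G : k) else 0 := by
  classical
  obtain ⟨l, hl, hreg⟩ := (Representation.leftRegular k G).exists_character_eq_sum_irreducible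
  have hsub : (l.map character : Multiset (G → k)).toFinset ⊆ s := by
    intro χ hχ
    obtain ⟨W, hW, rfl⟩ := List.mem_map.mp (by simpa using hχ)
    have := hl W hW
    exact (hs _).mpr ⟨W, simple_of_isIrreducible W, rfl⟩
  rw [← Representation.character_leftRegular_apply, hreg, ← Multiset.sum_coe,
    Finset.sum_multiset_count_of_subset _ _ hsub, Finset.sum_apply]
  refine Finset.sum_congr rfl fun χ hχ => ?_
  obtain ⟨V, hV, rfl⟩ := (hs χ).mp hχ
  rw [Multiset.coe_count, count_character_eq_finrank hl hreg V, char_one, Pi.smul_apply,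
    nsmul_eq_mul]

theorem sum_char_surfaceRelator_mul (V : FDRep k G) [Simple V] (g : ℕ) (w : G) :
    ∑ p : (Fin g → G) × (Fin g → G), V.character (surfaceRelator p.1 p.2 * w) =
      ((Fintype.card G / finrank k V) ^ 2) ^ g * V.character w := by
  obtain ⟨W, hW, hWV⟩ := exists_isIrreducible_character_eq V
  have hdim : (finrank k V : k) = finrank k W := by rw [← char_one, ← char_one, hWV]
  rw [← hWV, hdim]
  exact sum_surfaceRelator_mul _ _ hW.sum_character_commutator_mul g w

theorem card_surfaceRelator_eq_one_mul_card (s : Finset (G → k))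
    (hs : ∀ χ, χ ∈ s ↔ ∃ V : FDRep k G, Simple V ∧ χ = V.character) (g : ℕ) :
    (Nat.card {p : (Fin g → G) × (Fin g → G) // surfaceRelator p.1 p.2 = 1} : k) *
        Fintype.card G =
      ∑ χ ∈ s, χ 1 ^ 2 * ((Fintype.card G / χ 1) ^ 2) ^ g := by
  classical
  calc _ = ∑ p : (Fin g → G) × (Fin g → G),
        if surfaceRelator p.1 p.2 = 1 then (Fintype.card G : k) else 0 := by
        rw [Finset.sum_ite, Finset.sum_const_zero, add_zero, Finset.sum_const, nsmul_eq_mul,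
          Nat.card_eq_fintype_card, Fintype.card_subtype]
    _ = ∑ p : (Fin g → G) × (Fin g → G), ∑ χ ∈ s,
          χ 1 * χ (surfaceRelator p.1 p.2 * 1) := by
        simp only [mul_one, sum_apply_one_mul_apply_eq_ite s hs]
    _ = ∑ χ ∈ s, χ 1 *
          ∑ p : (Fin g → G) × (Fin g → G), χ (surfaceRelator p.1 p.2 * 1) := by
        rw [Finset.sum_comm]
        simp only [Finset.mul_sum]
    _ = _ := by
        refine Finset.sum_congr rfl fun χ hχ => ?_
        obtain ⟨V, hV, rfl⟩ := (hs χ).mp hχ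
        rw [sum_char_surfaceRelator_mul, char_one]
        ring

theorem char_one_ne_zero_of_mem (s : Finset (G → k))
    (hs : ∀ χ, χ ∈ s ↔ ∃ V : FDRep k G, Simple V ∧ χ = V.character) {χ : G → k}
    (hχ : χ ∈ s) :
    χ 1 ≠ 0 := by
  obtain ⟨V, hV, rfl⟩ := (hs χ).mp hχ
  simpa [char_one] using (finrank_pos_of_simple V).ne'

end FDRep

/-- Frobenius–Mednykh formula: for a finite group `Γ`, the orbifold count
of `Γ`-local systems on the closed orientable surface of genus `g`,
`#{(a₁,b₁,…,a_g,b_g) ∈ Γ^{2g} : ∏ ⁅aᵢ,bᵢ⁆ = 1} / |Γ|`, equals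
`∑_χ (|Γ|/χ(1))^{2g-2}`, the sum over irreducible complex characters of `Γ`. -/
theorem statement9 (Γ : Type) [Group Γ] [Fintype Γ] (g : ℕ)
    (s : Finset (Γ → ℂ))
    (hs : ∀ χ : Γ → ℂ, χ ∈ s ↔
      ∃ V : FDRep ℂ Γ, CategoryTheory.Simple V ∧ χ = fun x => FDRep.character V x) :
    (Nat.card {p : (Fin g → Γ) × (Fin g → Γ) //
        (List.ofFn fun i : Fin g => ⁅p.1 i, p.2 i⁆).prod = 1} : ℂ) / (Fintype.card Γ : ℂ)
      = ∑ χ ∈ s, ((Fintype.card Γ : ℂ) / χ 1) ^ (2 * (g : ℤ) - 2) := by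
  replace hs : ∀ χ, χ ∈ s ↔ ∃ V : FDRep ℂ Γ, Simple V ∧ χ = V.character := hs
  have hn : (Fintype.card Γ : ℂ) ≠ 0 := by simp
  rw [div_eq_iff hn]
  refine mul_right_cancel₀ hn ((FDRep.card_surfaceRelator_eq_one_mul_card s hs g).trans ?_)
  rw [Finset.sum_mul, Finset.sum_mul]
  refine Finset.sum_congr rfl fun χ hχ => ?_
  rw [zpow_sub₀ (div_ne_zero hn (FDRep.char_one_ne_zero_of_mem s hs hχ)), zpow_mul, zpow_natCast,
    zpow_two]
  field_simp
end

section
/- Let R be a commutative ring, A an R-algebra, and M an (A,A)-bimodule with the two R-actions agreeing. If A is Morita equivalent to R via a finitely generated projective generator P (so A ≅ End_R(P)), then the trace M ⊗_{A⊗A^op} A of the bimodule M = P ⊗_R N ⊗_R P^∨ (for an R-module N and P^∨ = Hom_R(P,R)) is isomorphic to N as an R-module. -/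
open TensorProduct

/-!
Contracting `p ⊗ n ⊗ φ ↦ φ(p) • n` kills the relations `a p ⊗ n ⊗ φ = p ⊗ n ⊗ (φ ∘ a)`,
so it descends to the trace. Since `P` is a generator, `1 = ∑ i, Fᵢ (Gᵢ)` for finitely
many `Fᵢ : P^∨`, `Gᵢ : P`, and `n ↦ ∑ i, Gᵢ ⊗ n ⊗ Fᵢ` is an inverse: moving the rank-one
endomorphism `x ↦ φ(x) • Gᵢ` across the tensor sign turns `Gᵢ ⊗ φ(p) n ⊗ Fᵢ` into
`Fᵢ(Gᵢ) • p ⊗ n ⊗ φ`.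
-/

namespace MoritaTrace

variable {R P D : Type*} [CommRing R] [AddCommGroup P] [Module R P]
  [AddCommGroup D] [Module R D] (N : Type*) [AddCommGroup N] [Module R N]
  (ι : D ≃ₗ[R] Module.Dual R P)

def traceRel : Submodule R (P ⊗[R] (N ⊗[R] D)) :=
  Submodule.span R {z | ∃ (a : Module.End R P) (p : P) (n : N) (φ : D),
    z = (a p) ⊗ₜ[R] (n ⊗ₜ[R] φ) - p ⊗ₜ[R] (n ⊗ₜ[R] (ι.symm (ι φ ∘ₗ a)))}

variable {N}

theorem mk_apply_tmul (a : Module.End R P) (p : P) (n : N) (φ : D) :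
    (traceRel N ι).mkQ ((a p) ⊗ₜ[R] (n ⊗ₜ[R] φ)) =
      (traceRel N ι).mkQ (p ⊗ₜ[R] (n ⊗ₜ[R] (ι.symm (ι φ ∘ₗ a)))) := by
  rw [← sub_eq_zero, ← map_sub, Submodule.mkQ_apply, Submodule.Quotient.mk_eq_zero]
  exact Submodule.subset_span ⟨a, p, n, φ, rfl⟩

def traceEval : P ⊗[R] (N ⊗[R] D) →ₗ[R] N :=
  TensorProduct.rid R N ∘ₗ
    (contractRight R P ∘ₗ TensorProduct.map LinearMap.id ι.toLinearMap).lTensor N ∘ₗ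
    (TensorProduct.leftComm R P N D).toLinearMap

@[simp]
theorem traceEval_tmul (p : P) (n : N) (d : D) :
    traceEval ι (p ⊗ₜ[R] (n ⊗ₜ[R] d)) = ι d p • n := by
  simp [traceEval]

theorem traceRel_le_ker_traceEval : traceRel N ι ≤ LinearMap.ker (traceEval ι) := by
  rw [traceRel, Submodule.span_le]
  rintro z ⟨a, p, n, φ, rfl⟩
  simp

section DualFamily

variable {κ : Type*} [Fintype κ] (F : κ → Module.Dual R P) (G : κ → P)

def traceCoev : N →ₗ[R] P ⊗[R] (N ⊗[R] D) :=
  ∑ i, TensorProduct.mk R P (N ⊗[R] D) (G i) ∘ₗ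
    (TensorProduct.mk R N D).flip (ι.symm (F i))

theorem traceCoev_apply (n : N) :
    traceCoev ι F G n = ∑ i, G i ⊗ₜ[R] (n ⊗ₜ[R] ι.symm (F i)) := by
  simp [traceCoev]

variable {F G} (hFG : ∑ i, F i (G i) = 1)
include hFG

theorem traceEval_traceCoev (n : N) : traceEval ι (traceCoev ι F G n) = n := by
  simp [traceCoev_apply, ← Finset.sum_smul, hFG]

theorem mk_traceCoev_tmul (p : P) (n : N) (d : D) :
    (traceRel N ι).mkQ (traceCoev ι F G (ι d p • n)) =
      (traceRel N ι).mkQ (p ⊗ₜ[R] (n ⊗ₜ[R] d)) := by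
  have move (i : κ) :
      (traceRel N ι).mkQ (G i ⊗ₜ[R] ((ι d p • n) ⊗ₜ[R] ι.symm (F i))) =
        F i (G i) • (traceRel N ι).mkQ (p ⊗ₜ[R] (n ⊗ₜ[R] d)) := by
    let a : Module.End R P := LinearMap.toSpanSingleton R P (G i) ∘ₗ ι d
    have hcomp : ι (ι.symm (F i)) ∘ₗ a = F i (G i) • ι d := by
      ext x; simp [a, mul_comm]
    calc (traceRel N ι).mkQ (G i ⊗ₜ[R] ((ι d p • n) ⊗ₜ[R] ι.symm (F i)))
        = (traceRel N ι).mkQ (a p ⊗ₜ[R] (n ⊗ₜ[R] ι.symm (F i))) := by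
          rw [show a p = ι d p • G i from rfl, smul_tmul (ι d p) (G i), smul_tmul']
      _ = F i (G i) • (traceRel N ι).mkQ (p ⊗ₜ[R] (n ⊗ₜ[R] d)) := by
          rw [mk_apply_tmul, hcomp, map_smul, LinearEquiv.symm_apply_apply, tmul_smul,
            tmul_smul, map_smul]
  simp only [traceCoev_apply, map_sum, move, ← Finset.sum_smul, hFG, one_smul]

theorem mk_traceCoev_traceEval (z : P ⊗[R] (N ⊗[R] D)) :
    (traceRel N ι).mkQ (traceCoev ι F G (traceEval ι z)) = (traceRel N ι).mkQ z := by
  induction z using TensorProduct.induction_on with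
  | zero => simp
  | add x y hx hy => simp only [map_add, hx, hy]
  | tmul p nd =>
    induction nd using TensorProduct.induction_on with
    | zero => simp
    | add x y hx hy => simp only [tmul_add, map_add, hx, hy]
    | tmul n d => rw [traceEval_tmul, mk_traceCoev_tmul ι hFG]

def traceEquiv : ((P ⊗[R] (N ⊗[R] D)) ⧸ traceRel N ι) ≃ₗ[R] N :=
  LinearEquiv.ofLinearMap ((traceRel N ι).liftQ (traceEval ι) (traceRel_le_ker_traceEval ι))
    ((traceRel N ι).mkQ ∘ₗ traceCoev ι F G)
    (LinearMap.ext fun n => traceEval_traceCoev ι hFG n)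
    (Submodule.linearMap_qext _ (LinearMap.ext fun z => mk_traceCoev_traceEval ι hFG z))

end DualFamily

theorem exists_sum_apply_eq_one
    (hgen : Submodule.span R {x : R | ∃ (φ : Module.Dual R P) (p : P), x = φ p} = ⊤) :
    ∃ (k : ℕ) (F : Fin k → Module.Dual R P) (G : Fin k → P), ∑ i, F i (G i) = 1 := by
  obtain ⟨k, c, v, hv⟩ := Submodule.mem_span_set'.mp (hgen ▸ Submodule.mem_top (x := (1 : R)))
  choose φ p hφ using fun i => (v i).2
  refine ⟨k, fun i => c i • φ i, p, ?_⟩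
  simp [← hv, hφ]

end MoritaTrace

open MoritaTrace in
theorem statement11_general (R : Type*) [CommRing R]
    (P : Type*) [AddCommGroup P] [Module R P]
    (hgen : Submodule.span R {x : R | ∃ (φ : P →ₗ[R] R) (p : P), x = φ p} = ⊤)
    (N : Type*) [AddCommGroup N] [Module R N]
    (D : Type*) [AddCommGroup D] [Module R D] (ι : D ≃ₗ[R] (P →ₗ[R] R))
    (Rel : Submodule R (P ⊗[R] (N ⊗[R] D)))
    (hRel : Rel = Submodule.span R
      {z | ∃ (a : Module.End R P) (p : P) (n : N) (φ : D),
        z = (a p) ⊗ₜ[R] (n ⊗ₜ[R] φ) - p ⊗ₜ[R] (n ⊗ₜ[R] (ι.symm (ι φ ∘ₗ a)))}) :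
    Nonempty (((P ⊗[R] (N ⊗[R] D)) ⧸ Rel) ≃ₗ[R] N) := by
  obtain ⟨k, F, G, hFG⟩ := exists_sum_apply_eq_one hgen
  subst hRel
  exact ⟨traceEquiv ι hFG⟩

/-- decategorified Morita invariance of the trace: let `R` be a commutative
ring, `P` a finitely generated projective generator, `A = End_R P`, `N` an `R`-module, and
`M = P ⊗_R N ⊗_R P^∨` the induced `(A,A)`-bimodule (`A` acting on the left through `P` and
on the right through `P^∨ = Hom_R(P,R)` by precomposition).  Then the trace
`M ⊗_{A⊗A^op} A` — the coequalizer of the left and right `A`-actions, i.e. `M` modulo the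
relations `a·m − m·a` — is isomorphic to `N` as an `R`-module.
(The dual `P^∨` is carried by an `R`-module `D` identified with `Hom_R(P,R)` via `ι`.) -/
theorem statement11 (R : Type*) [CommRing R]
    (P : Type*) [AddCommGroup P] [Module R P]
    [Module.Finite R P] [Module.Projective R P]
    (hgen : Submodule.span R {x : R | ∃ (φ : P →ₗ[R] R) (p : P), x = φ p} = ⊤)
    (N : Type*) [AddCommGroup N] [Module R N]
    (D : Type*) [AddCommGroup D] [Module R D] (ι : D ≃ₗ[R] (P →ₗ[R] R))
    (Rel : Submodule R (P ⊗[R] (N ⊗[R] D)))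
    (hRel : Rel = Submodule.span R
      {z | ∃ (a : Module.End R P) (p : P) (n : N) (φ : D),
        z = (a p) ⊗ₜ[R] (n ⊗ₜ[R] φ) - p ⊗ₜ[R] (n ⊗ₜ[R] (ι.symm (ι φ ∘ₗ a)))}) :
    Nonempty (((P ⊗[R] (N ⊗[R] D)) ⧸ Rel) ≃ₗ[R] N) :=
  statement11_general R P hgen N D ι Rel hRel
end
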